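/- Let (λ, μ) be a codimension-3 decoration with k = ∑μⱼ, b nonzero parts of λ, and suppose λ₁ ≥ 2 (i.e., the decoration is not Gorenstein). Then b ≤ k + 2. -/

import Mathlib

/-- Sort a list of integers in non-increasing order. -/
def rsort (l : List ℤ) : List ℤ := List.insertionSort (· ≥ ·) l

/-- Remove all non-positive parts (trailing zeros) from a partition. -/
def strip (l : List ℤ) : List ℤ := l.filter (fun x => 0 < x)

/-- The smallest minimal link of a codimension-`c` pair of partitions `(λ, μ)`:
choose the `c` largest parts of `λ` (padding with zeros if needed), shift them by
`p = (c-2)k + 1 - (λ₁ + ⋯ + λ_c)` where `k = ∑ μⱼ`, merge with `μ` and re-sort;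
the other partition becomes `(λ_{c+1}, …, λ_b)`. -/
def smlink (c : ℕ) (P : List ℤ × List ℤ) : List ℤ × List ℤ :=
  let p : ℤ := ((c : ℤ) - 2) * P.2.sum + 1 - (P.1.take c).sum
  (strip (rsort ((P.1.take c ++ List.replicate (c - P.1.length) 0).map (· + p) ++ P.2)),
   strip (P.1.drop c))

/-- The smallest minimal link of `P` produces nonnegative parts, i.e. `λ_c + p ≥ 0`. -/
def ValidLink (c : ℕ) (P : List ℤ × List ℤ) : Prop :=
  0 ≤ P.1.getD (c - 1) 0 + (((c : ℤ) - 2) * P.2.sum + 1 - (P.1.take c).sum)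

/-- A partition: a non-increasing list of positive integers. -/
def IsPartition (l : List ℤ) : Prop := l.Pairwise (· ≥ ·) ∧ ∀ x ∈ l, 0 < x

/-- A codimension-`c` decoration: a pair of partitions reachable to the complete
intersection pair `((1^c), (1))` by finitely many smallest minimal links, all of
whose intermediate links are valid (have nonnegative parts). -/
def IsDecoration (c : ℕ) (P : List ℤ × List ℤ) : Prop :=
  IsPartition P.1 ∧ IsPartition P.2 ∧
  ∃ n : ℕ, (∀ m < n, ValidLink c ((smlink c)^[m] P)) ∧
    (smlink c)^[n] P = (List.replicate c 1, [1])

/-!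
Along a chain of smallest minimal links the defect `∑λ - (c - 1)∑μ - 1` is multiplied by `1 - c`
at each step, so it vanishes on every decoration: `∑λ = 2k + 1` in codimension 3. A Gorenstein
pair `((1^{2k+1}), μ)` whose `μ` has two or more parts lies on a 2-cycle of the link that misses
`((1,1,1),(1))`, so Gorenstein decorations have `μ = (k)`.

For a non-Gorenstein decoration `λ = (a, b, c, r)` put `p = k + 1 - (a + b + c)`. If `p < 0`, then
`|r| ≤ ∑r = k + p < k`. Otherwise the link produces `(λ', r)` with `λ' = (A, B, C, r')` the sorted
merge of `(a + p, b + p, c + p)` and `μ`, and the next link produces `(λ'', r')` with `λ''` made of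
`r` and the positive ones among `A + p', B + p', C + p'`, where `p' ≤ -p`. This pair is again not
Gorenstein and is closer to `((1,1,1),(1))`; the bound for it, `|λ''| ≤ ∑r' + 2 = k + p + p' + 2`,
gives `|r| ≤ k - 1` after a case analysis on how many of the shifted parts survive.
-/

section Lists

lemma perm_rsort (l : List ℤ) : (rsort l).Perm l := List.perm_insertionSort _ l

lemma pairwise_rsort (l : List ℤ) : (rsort l).Pairwise (· ≥ ·) := List.pairwise_insertionSort _ l

lemma rsort_eq_self {l : List ℤ} (h : l.Pairwise (· ≥ ·)) : rsort l = l := h.insertionSort_eq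

lemma mem_strip {l : List ℤ} {x : ℤ} : x ∈ strip l ↔ x ∈ l ∧ 0 < x := by simp [strip]

lemma strip_eq_self {l : List ℤ} (h : ∀ x ∈ l, 0 < x) : strip l = l :=
  List.filter_eq_self.2 (by simpa using h)

lemma sum_strip {l : List ℤ} (h : ∀ x ∈ l, 0 ≤ x) : (strip l).sum = l.sum := by
  induction l with
  | nil => rfl
  | cons a l ih =>
    simp only [List.forall_mem_cons] at h
    rcases h.1.eq_or_lt with rfl | ha
    · simp [strip, ← ih h.2]
    · simp [strip, ha, ← ih h.2]

lemma isPartition_strip_rsort (l : List ℤ) : IsPartition (strip (rsort l)) :=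
  ⟨(pairwise_rsort l).filter _, fun _ hx => (mem_strip.1 hx).2⟩

lemma length_strip_rsort_append (l : List ℤ) {r : List ℤ} (hr : ∀ x ∈ r, 0 < x) :
    (strip (rsort (l ++ r))).length = l.countP (fun x => decide (0 < x)) + r.length := by
  rw [strip, ← List.countP_eq_length_filter, (perm_rsort _).countP_eq, List.countP_append,
    (List.countP_eq_length (l := r)).2 (by simpa using hr)]

lemma exists_eq_cons_cons_cons {l : List ℤ} (h : 3 ≤ l.length) :
    ∃ A B C r, l = A :: B :: C :: r := by
  rcases l with _ | ⟨A, _ | ⟨B, _ | ⟨C, r⟩⟩⟩ <;> simp at h ⊢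

lemma length_le_sum_of_pos {l : List ℤ} (h : ∀ x ∈ l, 0 < x) : (l.length : ℤ) ≤ l.sum := by
  simpa using List.card_nsmul_le_sum l 1 h

lemma le_getD_of_lt_countP {l : List ℤ} (hl : l.Pairwise (· ≥ ·)) {v : ℤ} {j : ℕ}
    (hj : j < l.countP (fun x => decide (v ≤ x))) : v ≤ l.getD j 0 := by
  induction l generalizing j with
  | nil => simp at hj
  | cons a l ih =>
    rw [List.pairwise_cons] at hl
    cases j with
    | zero =>
      obtain ⟨x, hx, hvx⟩ := List.countP_pos_iff.1 (Nat.zero_lt_of_lt hj)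
      rcases List.mem_cons.1 hx with rfl | hx
      · simpa using hvx
      · simpa using (of_decide_eq_true hvx).trans (hl.1 x hx)
    | succ j =>
      rw [List.countP_cons] at hj
      exact ih hl.2 (by split at hj <;> omega)

lemma le_getD_zero_of_mem {l : List ℤ} (hl : l.Pairwise (· ≥ ·)) {x : ℤ} (hx : x ∈ l) :
    x ≤ l.getD 0 0 :=
  le_getD_of_lt_countP hl (List.countP_pos_iff.2 ⟨x, hx, by simp⟩)

lemma mul_le_sum_of_le_countP {l : List ℤ} (h : ∀ x ∈ l, 0 ≤ x) {v : ℤ} (hv : 0 ≤ v) {j : ℕ}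
    (hj : j ≤ l.countP (fun x => decide (v ≤ x))) : j * v ≤ l.sum := by
  set f := l.filter fun x => decide (v ≤ x)
  have hf : f.length • v ≤ f.sum :=
    List.card_nsmul_le_sum _ v (fun x hx => by simpa using (List.mem_filter.1 hx).2)
  have hj' : (j : ℤ) ≤ f.length := by rw [← List.countP_eq_length_filter]; exact_mod_cast hj
  calc (j : ℤ) * v ≤ f.length * v := mul_le_mul_of_nonneg_right hj' hv
    _ ≤ f.sum := by simpa using hf
    _ ≤ l.sum := List.filter_sublist.sum_le_sum h

lemma IsPartition.getD_le_of_mem_padded {l : List ℤ} (hl : IsPartition l) {c : ℕ} {x : ℤ}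
    (hx : x ∈ l.take c ++ List.replicate (c - l.length) 0) : l.getD (c - 1) 0 ≤ x := by
  rcases lt_or_ge l.length c with hlen | hlen
  · rw [List.getD_eq_default _ _ (by omega)]
    rcases List.mem_append.1 hx with hx | hx
    · exact (hl.2 x (List.mem_of_mem_take hx)).le
    · exact (List.eq_of_mem_replicate hx).ge
  · rw [Nat.sub_eq_zero_of_le hlen, List.replicate_zero, List.append_nil] at hx
    obtain ⟨i, hi, rfl⟩ := List.mem_take_iff_getElem.1 hx
    rw [List.getD_eq_getElem _ _ (by omega)]
    rcases (show i ≤ c - 1 by omega).lt_or_eq with hlt | rfl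
    · exact List.pairwise_iff_getElem.1 hl.1 _ _ _ _ hlt
    · exact le_rfl

end Lists

section Link

variable {c : ℕ}

-- `IsDecoration c P` unfolds to `IsPartition P.1 ∧ IsPartition P.2 ∧ ∃ n, LinksToCI c n P`.
def LinksToCI (c n : ℕ) (P : List ℤ × List ℤ) : Prop :=
  (∀ m < n, ValidLink c ((smlink c)^[m] P)) ∧ (smlink c)^[n] P = (List.replicate c 1, [1])

lemma linksToCI_succ_iff {n : ℕ} {P : List ℤ × List ℤ} :
    LinksToCI c (n + 1) P ↔ ValidLink c P ∧ LinksToCI c n (smlink c P) := by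
  refine ⟨fun ⟨hv, hT⟩ => ⟨hv 0 n.succ_pos, fun m hm => hv (m + 1) (by omega), hT⟩,
    fun ⟨h0, hv, hT⟩ => ⟨fun m hm => ?_, hT⟩⟩
  cases m with
  | zero => exact h0
  | succ m => exact hv m (by omega)

lemma isPartition_smlink_fst (P : List ℤ × List ℤ) : IsPartition (smlink c P).1 :=
  isPartition_strip_rsort _

lemma IsPartition.smlink_snd {P : List ℤ × List ℤ} (h : IsPartition P.1) :
    IsPartition (smlink c P).2 :=
  ⟨(h.1.sublist (List.drop_sublist _ _)).filter _, fun _ hx => (mem_strip.1 hx).2⟩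

lemma sum_smlink_fst {P : List ℤ × List ℤ} (h1 : IsPartition P.1) (h2 : IsPartition P.2)
    (hv : ValidLink c P) :
    (smlink c P).1.sum =
      (P.1.take c).sum + c * ((c - 2) * P.2.sum + 1 - (P.1.take c).sum) + P.2.sum := by
  set p : ℤ := ((c : ℤ) - 2) * P.2.sum + 1 - (P.1.take c).sum
  set padded := P.1.take c ++ List.replicate (c - P.1.length) 0
  have hlen : padded.length = c := by simp [padded]; omega
  have hnonneg : ∀ x ∈ padded.map (· + p) ++ P.2, 0 ≤ x := by
    simp only [List.mem_append, List.mem_map]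
    rintro x (⟨y, hy, rfl⟩ | hx)
    · have := h1.getD_le_of_mem_padded hy
      unfold ValidLink at hv
      linarith
    · exact (h2.2 x hx).le
  have hsum : (padded.map (· + p)).sum = (P.1.take c).sum + c * p := by
    rw [List.sum_map_add, List.map_id', List.map_const', List.sum_replicate, hlen, nsmul_eq_mul]
    simp [padded]
  rw [smlink, sum_strip fun x hx => hnonneg x ((perm_rsort _).mem_iff.1 hx), (perm_rsort _).sum_eq,
    List.sum_append, hsum]

lemma sum_smlink_snd {P : List ℤ × List ℤ} (h1 : IsPartition P.1) :
    (smlink c P).2.sum = (P.1.drop c).sum :=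
  sum_strip fun x hx => (h1.2 x (List.mem_of_mem_drop hx)).le

lemma sum_fst_of_linksToCI (hc : c ≠ 1) {n : ℕ} {P : List ℤ × List ℤ} (h1 : IsPartition P.1)
    (h2 : IsPartition P.2) (hP : LinksToCI c n P) : P.1.sum = (c - 1) * P.2.sum + 1 := by
  induction n generalizing P with
  | zero =>
    obtain rfl : P = (List.replicate c 1, [1]) := hP.2
    simp
  | succ n ih =>
    obtain ⟨hv, hP'⟩ := linksToCI_succ_iff.1 hP
    have h := ih (isPartition_smlink_fst P) h1.smlink_snd hP'
    rw [sum_smlink_fst h1 h2 hv, sum_smlink_snd h1] at h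
    have hc' : (c : ℤ) - 1 ≠ 0 := sub_ne_zero.2 (by exact_mod_cast hc)
    refine mul_left_cancel₀ hc' ?_
    rw [← P.1.sum_take_add_sum_drop c]
    linear_combination -1 * h

end Link

lemma smlink_three_cons {a b c p : ℤ} {r μ : List ℤ} (hp : p = μ.sum + 1 - (a + b + c)) :
    smlink 3 (a :: b :: c :: r, μ) = (strip (rsort ([a + p, b + p, c + p] ++ μ)), strip r) := by
  subst hp
  simp only [smlink]
  norm_num
  ring_nf

lemma validLink_three_cons {a b c : ℤ} {r μ : List ℤ} :
    ValidLink 3 (a :: b :: c :: r, μ) ↔ 0 ≤ c + (μ.sum + 1 - (a + b + c)) := by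
  simp only [ValidLink]
  norm_num
  ring_nf

section Gorenstein

variable {μ : List ℤ} {L : ℕ}

lemma smlink_replicate_one (hμ : IsPartition μ) (hL : 3 ≤ L)
    (hμk : ∀ y ∈ μ, y < μ.sum) (hk : 1 < μ.sum) :
    smlink 3 (List.replicate L 1, μ) =
      ((μ.sum - 1) :: (μ.sum - 1) :: (μ.sum - 1) :: μ, List.replicate (L - 3) 1) := by
  obtain ⟨L, rfl⟩ : ∃ L', L = L' + 3 := ⟨L - 3, by omega⟩
  have hsorted : ((μ.sum - 1) :: (μ.sum - 1) :: (μ.sum - 1) :: μ).Pairwise (· ≥ ·) := by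
    simpa [List.pairwise_cons, hμ.1] using hμk
  have hpos : ∀ x ∈ (μ.sum - 1) :: (μ.sum - 1) :: (μ.sum - 1) :: μ, 0 < x := by
    simp only [List.mem_cons]
    rintro x (rfl | rfl | rfl | hx) <;> first | omega | exact hμ.2 x hx
  rw [List.replicate_succ, List.replicate_succ, List.replicate_succ,
    smlink_three_cons (p := μ.sum - 2) (by ring), Nat.add_sub_cancel,
    strip_eq_self (l := List.replicate L 1) (fun x hx => by simp [List.eq_of_mem_replicate hx])]
  simp only [show (1 : ℤ) + (μ.sum - 2) = μ.sum - 1 by ring, List.cons_append, List.nil_append]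
  rw [rsort_eq_self hsorted, strip_eq_self hpos]

lemma smlink_smlink_replicate_one (hμ : IsPartition μ) (hL : (L : ℤ) = 2 * μ.sum + 1)
    (hμk : ∀ y ∈ μ, y < μ.sum) (hk : 1 < μ.sum) :
    smlink 3 (smlink 3 (List.replicate L 1, μ)) = (List.replicate L 1, μ) := by
  obtain ⟨L, rfl⟩ : ∃ L', L = L' + 3 := ⟨L - 3, by omega⟩
  rw [smlink_replicate_one hμ (by omega) hμk hk, Nat.add_sub_cancel,
    smlink_three_cons (p := 2 - μ.sum) (by simp [List.sum_replicate]; omega),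
    show μ.sum - 1 + (2 - μ.sum) = 1 by ring, strip_eq_self hμ.2,
    rsort_eq_self (by simp [List.pairwise_replicate]), strip_eq_self (by simp)]
  simp [List.replicate_succ]

lemma IsPartition.eq_replicate_one {l : List ℤ} (hl : IsPartition l) (h : l.getD 0 0 ≤ 1) :
    l = List.replicate l.length 1 :=
  List.eq_replicate_length.2 fun x hx =>
    le_antisymm ((le_getD_zero_of_mem hl.1 hx).trans h) (hl.2 x hx)

lemma length_snd_le_one_of_linksToCI {n : ℕ} {P : List ℤ × List ℤ} (h1 : IsPartition P.1)
    (h2 : IsPartition P.2) (hP : LinksToCI 3 n P) (hg : P.1.getD 0 0 ≤ 1) : P.2.length ≤ 1 := by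
  by_contra! hlen
  have hsum := sum_fst_of_linksToCI (by norm_num) h1 h2 hP
  obtain ⟨lam, μ⟩ := P
  simp only at h1 h2 hg hlen hsum ⊢
  obtain ⟨L, rfl⟩ : ∃ L, lam = List.replicate L 1 := ⟨_, h1.eq_replicate_one hg⟩
  have hL : (L : ℤ) = 2 * μ.sum + 1 := by simpa [List.sum_replicate] using hsum
  have hμk : ∀ y ∈ μ, y < μ.sum := by
    intro y hy
    have hrest := length_le_sum_of_pos (l := μ.erase y) fun x hx =>
      h2.2 x (List.mem_of_mem_erase hx)
    rw [List.length_erase_of_mem hy] at hrest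
    have := (List.perm_cons_erase hy).sum_eq
    simp only [List.sum_cons] at this
    omega
  have hk : 1 < μ.sum := by
    have := length_le_sum_of_pos h2.2
    omega
  have hcycle : Function.IsPeriodicPt (smlink 3) 2 (List.replicate L 1, μ) :=
    smlink_smlink_replicate_one h2 hL hμk hk
  have hT := hP.2
  rw [← hcycle.iterate_mod_apply] at hT
  rcases Nat.mod_two_eq_zero_or_one n with h | h <;> rw [h] at hT
  · have := congrArg (fun P => P.2.length) hT
    simp at this
    omega
  · rw [Function.iterate_one, smlink_replicate_one h2 (by omega) hμk hk] at hT
    have := congrArg (fun P => P.2.length) hT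
    simp at this
    omega

end Gorenstein

section DoubleLink

variable {a b c p A B C : ℤ} {r' μ : List ℤ}

lemma le_of_perm_append_three (hl : (A :: B :: C :: r').Pairwise (· ≥ ·))
    (hperm : (A :: B :: C :: r').Perm ([a, b, c] ++ μ)) (hab : b ≤ a) (hbc : c ≤ b) :
    a ≤ A ∧ b ≤ B ∧ c ≤ C := by
  have key : ∀ v j, j < [a, b, c].countP (fun x => decide (v ≤ x)) →
      v ≤ (A :: B :: C :: r').getD j 0 := fun v j hj =>
    le_getD_of_lt_countP hl (by rw [hperm.countP_eq, List.countP_append]; omega)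
  refine ⟨key a 0 ?_, key b 1 ?_, key c 2 ?_⟩ <;>
    simp [List.countP_cons, hab, hbc, hbc.trans hab]

lemma two_le_getD_of_length_le_one (hl : (A :: B :: C :: r').Pairwise (· ≥ ·))
    (hperm : (A :: B :: C :: r').Perm ([a + p, b + p, c + p] ++ μ)) (hr' : r'.length ≤ 1)
    (ha : 2 ≤ a) (hab : b ≤ a) (hbc : c ≤ b) (hc : 1 ≤ c) (hp : p = μ.sum + 1 - (a + b + c))
    (hp0 : 0 ≤ p) {p' : ℤ} (hp' : A + B + C = μ.sum + p + 1 - p') (hvalid : 0 ≤ C + p')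
    (r : List ℤ) : 2 ≤ (strip (rsort ([A + p', B + p', C + p'] ++ r))).getD 0 0 := by
  obtain ⟨haA, -, -⟩ := le_of_perm_append_three hl hperm (by omega) (by omega)
  have hBA : B ≤ A := List.rel_of_pairwise_cons hl (by simp)
  have hCB : C ≤ B := List.rel_of_pairwise_cons hl.of_cons (by simp)
  have hμ : μ.length ≤ 1 := by
    have := hperm.length_eq
    simp only [List.length_cons, List.length_append] at this
    omega
  have hkA : μ.sum ≤ A := by
    rcases μ with _ | ⟨m, _ | _⟩
    · simp; omega
    · simpa using le_getD_zero_of_mem hl (hperm.mem_iff.2 (by simp))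
    · simp at hμ
  -- otherwise `A, B, C ∈ [-p', 1 - p']`, which `A + B + C`, `μ.sum ≤ A` and `2 ≤ a` rule out
  have hA : 2 ≤ A + p' := by omega
  exact hA.trans <| le_getD_zero_of_mem (isPartition_strip_rsort _).1 <|
    mem_strip.2 ⟨(perm_rsort _).mem_iff.2 (by simp), by omega⟩

lemma length_le_of_double_link (hl : (A :: B :: C :: r').Pairwise (· ≥ ·))
    (hperm : (A :: B :: C :: r').Perm ([a + p, b + p, c + p] ++ μ)) (hμ : ∀ x ∈ μ, 0 < x)
    (ha : 2 ≤ a) (hab : b ≤ a) (hbc : c ≤ b) (hc : 1 ≤ c) (hp : p = μ.sum + 1 - (a + b + c))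
    (hp0 : 0 ≤ p) {p' : ℤ} (hp' : A + B + C = μ.sum + p + 1 - p') {m : ℤ}
    (hlen : ([A + p', B + p', C + p'].countP (fun x => decide (0 < x)) : ℤ) + m ≤ r'.sum + 2) :
    m ≤ μ.sum - 1 := by
  obtain ⟨haA, hbB, hcC⟩ := le_of_perm_append_three hl hperm (by omega) (by omega)
  have hBA : B ≤ A := List.rel_of_pairwise_cons hl (by simp)
  have hCB : C ≤ B := List.rel_of_pairwise_cons hl.of_cons (by simp)
  have hsum : A + B + C + r'.sum = (a + p) + (b + p) + (c + p) + μ.sum := by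
    simpa [add_assoc] using hperm.sum_eq
  have haB : a + p = A ∨ a + p ≤ B := by
    rcases List.mem_cons.1 (hperm.mem_iff.2 (by simp : a + p ∈ [a + p, b + p, c + p] ++ μ))
      with h | h
    · exact Or.inl h
    · exact Or.inr (by simpa using le_getD_zero_of_mem hl.of_cons h)
  -- at most one shifted part reaches `C`, so at least two of `A, B, C` come from `μ`
  have hμC : b + p < C → 2 * C ≤ μ.sum := by
    intro hbC
    have h3 : 3 ≤ (A :: B :: C :: r').countP (fun x => decide (C ≤ x)) := by
      simp [hCB, hCB.trans hBA]
    rw [hperm.countP_eq, List.countP_append] at h3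
    have hT : [a + p, b + p, c + p].countP (fun x => decide (C ≤ x)) ≤ 1 := by
      simp only [List.countP_cons, List.countP_nil, decide_eq_true_eq]
      split_ifs <;> omega
    exact_mod_cast mul_le_sum_of_le_countP (fun x hx => (hμ x hx).le) (by omega) (j := 2) (by omega)
  simp only [List.countP_cons, List.countP_nil, decide_eq_true_eq] at hlen
  split_ifs at hlen <;> push_cast at hlen <;> omega

end DoubleLink

lemma length_le_of_linksToCI_smlink {a b c p : ℤ} {r μ : List ℤ} {n : ℕ}
    (ih : ∀ m < n, ∀ {P : List ℤ × List ℤ}, IsPartition P.1 → IsPartition P.2 →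
      LinksToCI 3 m P → 2 ≤ P.1.getD 0 0 → (P.1.length : ℤ) ≤ P.2.sum + 2)
    (hμ : IsPartition μ) (hr : ∀ x ∈ r, 0 < x) (ha : 2 ≤ a) (hab : b ≤ a) (hbc : c ≤ b)
    (hc : 1 ≤ c) (hp : p = μ.sum + 1 - (a + b + c)) (hp0 : 0 ≤ p)
    (hrsum : a + b + c + r.sum = 2 * μ.sum + 1)
    (hP' : LinksToCI 3 n (smlink 3 (a :: b :: c :: r, μ))) :
    (r.length : ℤ) ≤ μ.sum - 1 := by
  have hT : ∀ x ∈ [a + p, b + p, c + p] ++ μ, 0 < x := by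
    intro x hx
    simp only [List.cons_append, List.nil_append, List.mem_cons] at hx
    rcases hx with rfl | rfl | rfl | hx <;> first | omega | exact hμ.2 x hx
  rw [smlink_three_cons hp, strip_eq_self fun x hx => hT x ((perm_rsort _).mem_iff.1 hx),
    strip_eq_self hr] at hP'
  obtain ⟨A, B, C, r', hABC⟩ := exists_eq_cons_cons_cons (l := rsort ([a + p, b + p, c + p] ++ μ))
    (by simp [(perm_rsort _).length_eq])
  have hl : (A :: B :: C :: r').Pairwise (· ≥ ·) := hABC ▸ pairwise_rsort _
  have hperm := hABC ▸ perm_rsort ([a + p, b + p, c + p] ++ μ)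
  have haA := (le_of_perm_append_three hl hperm (by omega) (by omega)).1
  rw [hABC] at hP'
  cases n with
  | zero =>
    have := congrArg (fun P => P.1.getD 0 0) hP'.2
    simp at this
    omega
  | succ m =>
  obtain ⟨hv, hP''⟩ := linksToCI_succ_iff.1 hP'
  set p' := r.sum + 1 - (A + B + C) with hp'
  have hvalid : 0 ≤ C + p' := validLink_three_cons.1 hv
  have hr' : ∀ x ∈ r', 0 < x := fun x hx => hT x (hperm.mem_iff.1 (by simp [hx]))
  rw [smlink_three_cons hp', strip_eq_self hr'] at hP''
  set lam'' := strip (rsort ([A + p', B + p', C + p'] ++ r))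
  have h1'' : IsPartition lam'' := isPartition_strip_rsort _
  have h2'' : IsPartition r' := ⟨hl.of_cons.of_cons.of_cons, hr'⟩
  have hpABC : A + B + C = μ.sum + p + 1 - p' := by omega
  have hg'' : 2 ≤ lam''.getD 0 0 := by
    by_contra! h
    have hr'len := length_snd_le_one_of_linksToCI h1'' h2'' hP'' (show lam''.getD 0 0 ≤ 1 by omega)
    exact h.not_ge
      (two_le_getD_of_length_le_one hl hperm hr'len ha hab hbc hc hp hp0 hpABC hvalid r)
  have hIH := ih m (by omega) h1'' h2'' hP'' hg''
  rw [length_strip_rsort_append _ hr] at hIH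
  exact length_le_of_double_link hl hperm hμ.2 ha hab hbc hc hp hp0 hpABC
    (by push_cast at hIH; exact hIH)

lemma length_fst_le_of_linksToCI {n : ℕ} {P : List ℤ × List ℤ} (h1 : IsPartition P.1)
    (h2 : IsPartition P.2) (hP : LinksToCI 3 n P) (hg : 2 ≤ P.1.getD 0 0) :
    (P.1.length : ℤ) ≤ P.2.sum + 2 := by
  induction n using Nat.strong_induction_on generalizing P with
  | _ n ih =>
  have hsum := sum_fst_of_linksToCI (by norm_num) h1 h2 hP
  obtain ⟨lam, μ⟩ := P
  simp only at h1 h2 hg hsum hP ⊢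
  have hk : 0 ≤ μ.sum := List.sum_nonneg fun x hx => (h2.2 x hx).le
  rcases lam with _ | ⟨a, _ | ⟨b, _ | ⟨c, r⟩⟩⟩
  · simp at hg
  · simp; omega
  · simp; omega
  have ha : 2 ≤ a := by simpa using hg
  have hab : b ≤ a := List.rel_of_pairwise_cons h1.1 (by simp)
  have hbc : c ≤ b := List.rel_of_pairwise_cons h1.1.of_cons (by simp)
  have hc : 1 ≤ c := h1.2 c (by simp)
  have hr : ∀ x ∈ r, 0 < x := fun x hx => h1.2 x (by simp [hx])
  have hrsum : a + b + c + r.sum = 2 * μ.sum + 1 := by simpa [add_assoc] using hsum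
  suffices (r.length : ℤ) ≤ μ.sum - 1 by simp; omega
  set p := μ.sum + 1 - (a + b + c) with hp
  rcases lt_or_ge p 0 with hp0 | hp0
  · have := length_le_sum_of_pos hr
    omega
  cases n with
  | zero =>
    have := congrArg (fun P => P.1.getD 0 0) hP.2
    simp at this
    omega
  | succ n =>
  exact length_le_of_linksToCI_smlink (fun m hm => ih m (by omega)) h2 hr ha hab hbc hc hp hp0
    hrsum (linksToCI_succ_iff.1 hP).2

/-- A non-Gorenstein codimension-3 decoration `(λ, μ)` (i.e. with `λ₁ ≥ 2`),
with `k = ∑μⱼ` and `b` nonzero parts of `λ`, satisfies `b ≤ k + 2`. -/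
theorem stmt14 (P : List ℤ × List ℤ) (k : ℤ) (hk : P.2.sum = k)
    (h : IsDecoration 3 P) (hng : 2 ≤ P.1.getD 0 0) :
    (P.1.length : ℤ) ≤ k + 2 := by
  obtain ⟨h1, h2, n, hP⟩ := h
  exact hk ▸ length_fst_le_of_linksToCI h1 h2 hP hng
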